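/- Every invertible tensor A ∈ C^{p×p×n} (all frontal slices Â^(i) invertible) admits a t-LU decomposition with partial pivoting: P * A = L * U, where P̂^(i) are permutation matrices, L is f-unit-lower-triangular (each L̂^(i) is unit lower triangular), and U is f-upper-triangular. -/

import Mathlib

open Matrix Complex Filter Topology Kronecker

noncomputable def tomega (n : ℕ) : ℂ := Complex.exp (2 * (Real.pi : ℂ) * Complex.I / (n : ℂ))

/-- DFT along the third mode (frontal slices indexed by `ZMod n`). -/
noncomputable def dft {l p n : ℕ} [NeZero n] (A : ZMod n → Matrix (Fin l) (Fin p) ℂ) :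
    ZMod n → Matrix (Fin l) (Fin p) ℂ :=
  fun k => ∑ j : ZMod n, (tomega n) ^ (k.val * j.val) • A j

/-- The t-product: circular convolution of frontal slices,
`(A * B)⁽ᵏ⁾ = ∑ⱼ A⁽ᵏ⁻ʲ⁾ B⁽ʲ⁾`, which is `fold (bcirc A * unfold B)`. -/
noncomputable def tmul3 {l q p n : ℕ} [NeZero n]
    (A : ZMod n → Matrix (Fin l) (Fin q) ℂ) (B : ZMod n → Matrix (Fin q) (Fin p) ℂ) :
    ZMod n → Matrix (Fin l) (Fin p) ℂ :=
  fun k => ∑ j : ZMod n, A (k - j) * B j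

/-- Tensor conjugate transpose: conjugate-transpose each slice and reverse slices 2..n. -/
def tconj {l p n : ℕ} (A : ZMod n → Matrix (Fin l) (Fin p) ℂ) :
    ZMod n → Matrix (Fin p) (Fin l) ℂ :=
  fun k => (A (-k))ᴴ

/-- Identity tensor: first frontal slice the identity, the rest zero. -/
noncomputable def tId (l n : ℕ) : ZMod n → Matrix (Fin l) (Fin l) ℂ :=
  fun k => if k = 0 then 1 else 0

noncomputable def dftTube {n : ℕ} [NeZero n] (a : ZMod n → ℂ) : ZMod n → ℂ :=
  fun k => ∑ j : ZMod n, (tomega n) ^ (k.val * j.val) * a j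

noncomputable def idftTube {n : ℕ} [NeZero n] (a : ZMod n → ℂ) : ZMod n → ℂ :=
  fun k => (n : ℂ)⁻¹ * ∑ j : ZMod n, (starRingEnd ℂ) ((tomega n) ^ (k.val * j.val)) * a j

/-- Tubal determinant: the tube whose Fourier coefficients are `det (Â⁽ⁱ⁾)`. -/
noncomputable def tdet {p n : ℕ} [NeZero n] (A : ZMod n → Matrix (Fin p) (Fin p) ℂ) :
    ZMod n → ℂ :=
  idftTube (fun k => (dft A k).det)

/-- Product of tubes (circular convolution). -/
noncomputable def tubeMul {n : ℕ} [NeZero n] (a b : ZMod n → ℂ) : ZMod n → ℂ :=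
  fun k => ∑ j : ZMod n, a (k - j) * b j

/-- Conjugate transpose of a tube. -/
def tubeConj {n : ℕ} (a : ZMod n → ℂ) : ZMod n → ℂ := fun k => (starRingEnd ℂ) (a (-k))

/-- Product of a tube with a tensor. -/
noncomputable def tsmul {l p n : ℕ} [NeZero n] (a : ZMod n → ℂ)
    (A : ZMod n → Matrix (Fin l) (Fin p) ℂ) : ZMod n → Matrix (Fin l) (Fin p) ℂ :=
  fun k => ∑ j : ZMod n, a (k - j) • A j

/-- Tubal power. -/
noncomputable def tubePow {n : ℕ} [NeZero n] (a : ZMod n → ℂ) : ℕ → (ZMod n → ℂ)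
  | 0 => fun k => if k = 0 then 1 else 0
  | m + 1 => tubeMul a (tubePow a m)

/-- Tensor t-power. -/
noncomputable def tpow {p n : ℕ} [NeZero n] (A : ZMod n → Matrix (Fin p) (Fin p) ℂ) :
    ℕ → (ZMod n → Matrix (Fin p) (Fin p) ℂ)
  | 0 => tId p n
  | m + 1 => tmul3 A (tpow A m)

/-- `lam` is an eigentube of `A`: each Fourier coefficient of `lam` is an eigenvalue
of the corresponding Fourier slice of `A`. -/
def isEigentube {p n : ℕ} [NeZero n] (A : ZMod n → Matrix (Fin p) (Fin p) ℂ)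
    (lam : ZMod n → ℂ) : Prop :=
  ∀ k, ∃ v : Fin p → ℂ, v ≠ 0 ∧ (dft A k) *ᵥ v = dftTube lam k • v


section TLUAux

set_option linter.unusedSectionVars false
open Finset

section Fourier
variable {n : ℕ} [NeZero n]


variable {n : ℕ} [NeZero n]

lemma tomega_prim : IsPrimitiveRoot (tomega n) n := by
  have := Complex.isPrimitiveRoot_exp n (NeZero.ne n)
  convert this using 2
  rfl

lemma tomega_pow_n : (tomega n) ^ n = 1 := tomega_prim.pow_eq_one

lemma tomega_ne_zero : (tomega n) ≠ 0 := by
  intro h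
  have := tomega_pow_n (n := n)
  rw [h] at this
  simp [NeZero.ne n] at this

lemma tomega_abs : ‖tomega n‖ = 1 := by
  unfold tomega
  rw [Complex.norm_exp]
  norm_num

lemma tomega_conj : (starRingEnd ℂ) (tomega n) = (tomega n)⁻¹ := by
  rw [Complex.inv_def]
  have h := tomega_abs (n := n)
  rw [Complex.normSq_eq_norm_sq, h]
  simp

lemma tomega_pow_mod (a : ℕ) : (tomega n) ^ a = (tomega n) ^ (a % n) := by
  conv_lhs => rw [← Nat.mod_add_div a n]
  rw [pow_add, pow_mul, tomega_pow_n, one_pow, mul_one]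

lemma tomega_pow_modEq {a b : ℕ} (h : a ≡ b [MOD n]) : (tomega n) ^ a = (tomega n) ^ b := by
  rw [tomega_pow_mod a, tomega_pow_mod b, h]

lemma zmod_sum_eq_range {M : Type*} [AddCommMonoid M] (f : ℕ → M) :
    ∑ j : ZMod n, f j.val = ∑ i ∈ Finset.range n, f i := by
  refine Finset.sum_bij' (fun j _ => j.val) (fun i _ => (i : ZMod n)) ?_ ?_ ?_ ?_ ?_
  · intro a _; exact Finset.mem_range.mpr (ZMod.val_lt a)
  · intro a _; exact Finset.mem_univ _
  · intro a _; simp [ZMod.natCast_val, ZMod.cast_id]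
  · intro a ha; exact ZMod.val_cast_of_lt (Finset.mem_range.mp ha)
  · intro a _; rfl

lemma tomega_orth (k m : ZMod n) :
    ∑ j : ZMod n, (tomega n) ^ (k.val * j.val) *
      (starRingEnd ℂ) ((tomega n) ^ (j.val * m.val)) = if k = m then (n : ℂ) else 0 := by
  have hterm : ∀ j : ZMod n, (tomega n) ^ (k.val * j.val) *
      (starRingEnd ℂ) ((tomega n) ^ (j.val * m.val))
      = ((tomega n) ^ k.val / (tomega n) ^ m.val) ^ j.val := by
    intro j
    rw [map_pow, tomega_conj, div_pow, ← pow_mul, ← pow_mul, div_eq_mul_inv, ← inv_pow,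
      mul_comm j.val m.val]
  simp_rw [hterm]
  rw [zmod_sum_eq_range (fun i => ((tomega n) ^ k.val / (tomega n) ^ m.val) ^ i)]
  by_cases h : k = m
  · subst h
    simp [div_self (pow_ne_zero _ (tomega_ne_zero (n := n)))]
  · have hz : (tomega n) ^ k.val / (tomega n) ^ m.val ≠ 1 := by
      intro hc
      apply h
      have : (tomega n) ^ k.val = (tomega n) ^ m.val := by
        rw [div_eq_one_iff_eq (pow_ne_zero _ (tomega_ne_zero (n := n)))] at hc
        exact hc
      have h2 := tomega_prim.pow_inj (ZMod.val_lt k) (ZMod.val_lt m) this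
      exact ZMod.val_injective n h2
    rw [if_neg h, geom_sum_eq hz]
    have : ((tomega n) ^ k.val / (tomega n) ^ m.val) ^ n = 1 := by
      rw [div_pow, ← pow_mul, ← pow_mul, mul_comm k.val n, mul_comm m.val n,
        pow_mul, pow_mul, tomega_pow_n, one_pow, one_pow]
      exact div_self one_ne_zero
    rw [this, sub_self, zero_div]

noncomputable def idft3 {l p : ℕ} (X : ZMod n → Matrix (Fin l) (Fin p) ℂ) :
    ZMod n → Matrix (Fin l) (Fin p) ℂ :=
  fun j => (n : ℂ)⁻¹ • ∑ m : ZMod n, (starRingEnd ℂ) ((tomega n) ^ (j.val * m.val)) • X m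

lemma dft_idft3 {l p : ℕ} (X : ZMod n → Matrix (Fin l) (Fin p) ℂ) : dft (idft3 X) = X := by
  funext k
  show (∑ j : ZMod n, (tomega n) ^ (k.val * j.val) •
      ((n : ℂ)⁻¹ • ∑ m : ZMod n, (starRingEnd ℂ) ((tomega n) ^ (j.val * m.val)) • X m)) = X k
  simp only [Finset.smul_sum, smul_smul]
  rw [Finset.sum_comm]
  have : ∀ m : ZMod n, (∑ j : ZMod n,
      ((tomega n) ^ (k.val * j.val) * ((n : ℂ)⁻¹ * (starRingEnd ℂ) ((tomega n) ^ (j.val * m.val)))) • X m)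
      = ((n : ℂ)⁻¹ * (if k = m then (n : ℂ) else 0)) • X m := by
    intro m
    rw [← Finset.sum_smul, ← tomega_orth k m, Finset.mul_sum]
    congr 1
    apply Finset.sum_congr rfl
    intro j _
    ring
  simp_rw [this]
  have hn : ((n : ℂ))⁻¹ * (n : ℂ) = 1 := inv_mul_cancel₀ (Nat.cast_ne_zero.mpr (NeZero.ne n))
  simp [mul_ite, hn, apply_ite (fun c : ℂ => c • X _), Finset.sum_ite_eq]

lemma tomega_orth' (k m : ZMod n) :
    ∑ j : ZMod n, (starRingEnd ℂ) ((tomega n) ^ (k.val * j.val)) * (tomega n) ^ (j.val * m.val)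
      = if k = m then (n : ℂ) else 0 := by
  have := congrArg (starRingEnd ℂ) (tomega_orth (n := n) k m)
  rw [map_sum] at this
  simp only [_root_.map_mul, Complex.conj_conj] at this
  rw [this]
  split <;> simp

lemma idft3_dft {l p : ℕ} (X : ZMod n → Matrix (Fin l) (Fin p) ℂ) : idft3 (dft X) = X := by
  funext k
  show ((n : ℂ)⁻¹ • ∑ m : ZMod n, (starRingEnd ℂ) ((tomega n) ^ (k.val * m.val)) •
      (∑ j : ZMod n, (tomega n) ^ (m.val * j.val) • X j)) = X k
  simp only [Finset.smul_sum, smul_smul]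
  rw [Finset.sum_comm]
  show (∑ j : ZMod n, ∑ m : ZMod n, ((n : ℂ)⁻¹ * ((starRingEnd ℂ) ((tomega n) ^ (k.val * m.val)) * (tomega n) ^ (m.val * j.val))) • X j) = X k
  have : ∀ j : ZMod n, (∑ m : ZMod n,
      ((n : ℂ)⁻¹ * ((starRingEnd ℂ) ((tomega n) ^ (k.val * m.val)) * (tomega n) ^ (m.val * j.val))) • X j)
      = ((n : ℂ)⁻¹ * (if k = j then (n : ℂ) else 0)) • X j := by
    intro j
    rw [← Finset.sum_smul, ← tomega_orth' k j, Finset.mul_sum]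
  simp_rw [this]
  have hn : ((n : ℂ))⁻¹ * (n : ℂ) = 1 := inv_mul_cancel₀ (Nat.cast_ne_zero.mpr (NeZero.ne n))
  simp [mul_ite, hn, apply_ite (fun c : ℂ => c • X _), Finset.sum_ite_eq]

lemma dft_injective {l p : ℕ} : Function.Injective (dft (l := l) (p := p) (n := n)) := by
  intro X Y h
  rw [← idft3_dft X, h, idft3_dft]

lemma tomega_pow_val_add (k i m : ZMod n) :
    (tomega n) ^ (k.val * (i + m).val) = (tomega n) ^ (k.val * i.val) * (tomega n) ^ (k.val * m.val) := by
  rw [← pow_add]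
  apply tomega_pow_modEq
  calc k.val * (i + m).val ≡ k.val * (i.val + m.val) [MOD n] := by
        rw [ZMod.val_add]
        exact Nat.ModEq.mul_left _ (Nat.mod_modEq _ _)
    _ = k.val * i.val + k.val * m.val := by ring

lemma dft_tmul3 {l q p' : ℕ} (A : ZMod n → Matrix (Fin l) (Fin q) ℂ)
    (B : ZMod n → Matrix (Fin q) (Fin p') ℂ) (k : ZMod n) :
    dft (tmul3 A B) k = dft A k * dft B k := by
  show (∑ j : ZMod n, (tomega n) ^ (k.val * j.val) • ∑ m : ZMod n, A (j - m) * B m)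
    = (∑ i : ZMod n, (tomega n) ^ (k.val * i.val) • A i) * (∑ m : ZMod n, (tomega n) ^ (k.val * m.val) • B m)
  simp only [Finset.smul_sum]
  rw [Finset.sum_comm, Matrix.mul_sum]
  apply Finset.sum_congr rfl
  intro m _
  rw [Matrix.sum_mul]
  rw [← Equiv.sum_comp (Equiv.addRight m)
    (fun x => (tomega n) ^ (k.val * x.val) • (A (x - m) * B m))]
  apply Finset.sum_congr rfl
  intro i _
  show (tomega n) ^ (k.val * (i + m).val) • (A (i + m - m) * B m)
    = ((tomega n) ^ (k.val * i.val) • A i) * ((tomega n) ^ (k.val * m.val) • B m)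
  rw [add_sub_cancel_right, tomega_pow_val_add, Matrix.smul_mul, Matrix.mul_smul, smul_smul]

end Fourier


def permExt {p : ℕ} (σ : Equiv.Perm (Fin p)) : Equiv.Perm (Fin (p + 1)) where
  toFun := Fin.cases 0 (fun i => (σ i).succ)
  invFun := Fin.cases 0 (fun i => (σ⁻¹ i).succ)
  left_inv := by
    intro i
    cases i using Fin.cases <;> simp
  right_inv := by
    intro i
    cases i using Fin.cases <;> simp

@[simp] lemma permExt_zero {p : ℕ} (σ : Equiv.Perm (Fin p)) : permExt σ 0 = 0 := rfl
@[simp] lemma permExt_succ {p : ℕ} (σ : Equiv.Perm (Fin p)) (i : Fin p) :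
    permExt σ i.succ = (σ i).succ := rfl

lemma lu_exists : ∀ (p : ℕ) (M : Matrix (Fin p) (Fin p) ℂ),
    ∃ (σ : Equiv.Perm (Fin p)) (L U : Matrix (Fin p) (Fin p) ℂ),
      (∀ i, L i i = 1) ∧ (∀ i j : Fin p, (i : ℕ) < (j : ℕ) → L i j = 0) ∧
      (∀ i j : Fin p, (j : ℕ) < (i : ℕ) → U i j = 0) ∧
      M.submatrix σ id = L * U := by
  intro p
  induction p with
  | zero =>
    intro M
    refine ⟨1, 1, M, fun i => i.elim0, fun i => i.elim0, fun i => i.elim0, ?_⟩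
    ext i j
    exact i.elim0
  | succ p ih =>
    intro M
    -- choose pivot permutation τ
    obtain ⟨τ, hτ⟩ : ∃ τ : Equiv.Perm (Fin (p + 1)),
        (M (τ 0) 0 = 0 → ∀ i, M (τ i) 0 = 0) := by
      by_cases h : ∃ i, M i 0 ≠ 0
      · obtain ⟨i0, hi0⟩ := h
        refine ⟨Equiv.swap 0 i0, fun h0 => absurd ?_ hi0⟩
        rwa [Equiv.swap_apply_left] at h0
      · push_neg at h
        exact ⟨1, fun _ i => h _⟩
    set M' : Matrix (Fin (p + 1)) (Fin (p + 1)) ℂ := M.submatrix τ id with hM'def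
    have hM' : ∀ i j, M' i j = M (τ i) j := fun i j => rfl
    set piv : ℂ := M' 0 0 with hpivdef
    set c : Fin (p + 1) → ℂ := fun i => if piv = 0 then 0 else M' i 0 / piv with hcdef
    have hc : ∀ i, c i * piv = M' i 0 := by
      intro i
      by_cases hp : piv = 0
      · have h0 : M' 0 0 = 0 := hp
        have := hτ h0 i
        simp only [hcdef, if_pos hp, zero_mul]
        exact (this).symm
      · simp only [hcdef, if_neg hp]
        field_simp
    set B : Matrix (Fin p) (Fin p) ℂ :=
      Matrix.of (fun i j => M' i.succ j.succ - c i.succ * M' 0 j.succ) with hBdef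
    obtain ⟨σ', L', U', hL'd, hL'l, hU'u, hB⟩ := ih B
    have hBe : ∀ i j, M' (σ' i).succ j.succ - c (σ' i).succ * M' 0 j.succ = (L' * U') i j := by
      intro i j
      rw [← hB]
      rfl
    set L0 : Matrix (Fin (p + 1)) (Fin (p + 1)) ℂ := Matrix.of (fun i j =>
      Fin.cases (if j = 0 then (1 : ℂ) else 0)
        (fun i' => Fin.cases (c (σ' i').succ) (fun j' => L' i' j') j) i) with hL0
    set U0 : Matrix (Fin (p + 1)) (Fin (p + 1)) ℂ := Matrix.of (fun i j =>
      Fin.cases (M' 0 j) (fun i' => Fin.cases 0 (fun j' => U' i' j') j) i) with hU0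
    have hL0z : ∀ j, L0 0 j = if j = 0 then 1 else 0 := fun j => rfl
    have hL0sz : ∀ i' : Fin p, L0 i'.succ 0 = c (σ' i').succ := fun i' => rfl
    have hL0ss : ∀ (i' j' : Fin p), L0 i'.succ j'.succ = L' i' j' := fun i' j' => rfl
    have hU0z : ∀ j, U0 0 j = M' 0 j := fun j => rfl
    have hU0sz : ∀ i' : Fin p, U0 i'.succ 0 = 0 := fun i' => rfl
    have hU0ss : ∀ (i' j' : Fin p), U0 i'.succ j'.succ = U' i' j' := fun i' j' => rfl
    refine ⟨τ * permExt σ', L0, U0, ?_, ?_, ?_, ?_⟩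
    · intro i
      cases i using Fin.cases with
      | zero => simp [hL0z]
      | succ i' => rw [hL0ss]; exact hL'd i'
    · intro i j hij
      cases i using Fin.cases with
      | zero =>
        have hj : j ≠ 0 := by
          intro hj; subst hj; simp at hij
        rw [hL0z, if_neg hj]
      | succ i' =>
        cases j using Fin.cases with
        | zero => simp at hij
        | succ j' =>
          rw [hL0ss]
          exact hL'l i' j' (by simpa [Fin.val_succ] using hij)
    · intro i j hij
      cases i using Fin.cases with
      | zero => simp at hij
      | succ i' =>
        cases j using Fin.cases with
        | zero => rw [hU0sz]
        | succ j' =>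
          rw [hU0ss]
          exact hU'u i' j' (by simpa [Fin.val_succ] using hij)
    · ext i j
      rw [Matrix.mul_apply, Fin.sum_univ_succ]
      show M (τ (permExt σ' i)) j = _
      cases i using Fin.cases with
      | zero =>
        rw [permExt_zero]
        have hz : ∀ k' : Fin p, L0 0 k'.succ * U0 k'.succ j = 0 := by
          intro k'
          rw [hL0z, if_neg (Fin.succ_ne_zero k'), zero_mul]
        rw [Finset.sum_congr rfl (fun k' _ => hz k'), Finset.sum_const, smul_zero, add_zero,
          hL0z, if_pos rfl, one_mul, hU0z]
        exact hM' 0 j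
      | succ i' =>
        rw [permExt_succ]
        cases j using Fin.cases with
        | zero =>
          have hz : ∀ k' : Fin p, L0 i'.succ k'.succ * U0 k'.succ 0 = 0 := by
            intro k'
            rw [hU0sz, mul_zero]
          rw [Finset.sum_congr rfl (fun k' _ => hz k'), Finset.sum_const, smul_zero, add_zero,
            hL0sz, hU0z]
          rw [← hM', ← hc]
        | succ j' =>
          have hs : ∀ k' : Fin p, L0 i'.succ k'.succ * U0 k'.succ j'.succ = L' i' k' * U' k' j' := by
            intro k'
            rw [hL0ss, hU0ss]
          rw [Finset.sum_congr rfl (fun k' _ => hs k'), hL0sz, hU0z, ← Matrix.mul_apply,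
            ← hBe i' j', ← hM']
          ring

lemma permMat_mul {m q : ℕ} (σ : Equiv.Perm (Fin m)) (M : Matrix (Fin m) (Fin q) ℂ) :
    (Matrix.of fun i j => if σ⁻¹ j = i then (1 : ℂ) else 0) * M = M.submatrix σ id := by
  ext i j
  rw [Matrix.mul_apply]
  rw [Finset.sum_eq_single (σ i)]
  · simp
  · intro t _ ht
    have : ¬ (σ⁻¹ t = i) := by
      intro hc
      apply ht
      rw [← hc, Equiv.Perm.inv_def, Equiv.apply_symm_apply]
    simp only [Matrix.of_apply, if_neg this, zero_mul]
  · simp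

end TLUAux

/-- every invertible tensor admits a t-LU decomposition with partial
pivoting `P * A = L * U`, with each `P̂⁽ⁱ⁾` a permutation matrix, `L` f-unit-lower
triangular and `U` f-upper-triangular. -/
theorem tLU_exists {p n : ℕ} [NeZero n] (A : ZMod n → Matrix (Fin p) (Fin p) ℂ)
    (hA : ∀ i : ZMod n, IsUnit (dft A i)) :
    ∃ P L U : ZMod n → Matrix (Fin p) (Fin p) ℂ,
      (∀ k : ZMod n, ∃ σ : Equiv.Perm (Fin p),
        dft P k = Matrix.of fun i j => if σ j = i then (1 : ℂ) else 0) ∧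
      (∀ k : ZMod n, ∀ i : Fin p, dft L k i i = 1) ∧
      (∀ k : ZMod n, ∀ i j : Fin p, (i : ℕ) < (j : ℕ) → dft L k i j = 0) ∧
      (∀ k : ZMod n, ∀ i j : Fin p, (j : ℕ) < (i : ℕ) → dft U k i j = 0) ∧
      tmul3 P A = tmul3 L U := by
  choose σ Lh Uh hLd hLl hUu hEq using fun k : ZMod n => lu_exists p (dft A k)
  refine ⟨idft3 (fun k => Matrix.of fun i j => if (σ k)⁻¹ j = i then (1 : ℂ) else 0),
    idft3 Lh, idft3 Uh, ?_, ?_, ?_, ?_, ?_⟩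
  · intro k
    exact ⟨(σ k)⁻¹, congrFun (dft_idft3 _) k⟩
  · intro k i
    rw [congrFun (dft_idft3 Lh) k]
    exact hLd k i
  · intro k i j hij
    rw [congrFun (dft_idft3 Lh) k]
    exact hLl k i j hij
  · intro k i j hij
    rw [congrFun (dft_idft3 Uh) k]
    exact hUu k i j hij
  · apply dft_injective
    funext k
    rw [dft_tmul3, dft_tmul3, congrFun (dft_idft3 _) k, congrFun (dft_idft3 Lh) k,
      congrFun (dft_idft3 Uh) k, permMat_mul, hEq k]
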